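/- With notation as in the pencil decomposition and c_1, ..., c_{n+1} nonzero, if det(M_0 + x M_1) = 0 as a polynomial in C[x], then w Q^{-1} v = c_{n+1} and w Q^{-1} (B Q^{-1})^k v = 0 for all k ≥ 1. -/

import Mathlib

open Matrix

noncomputable def M0 (c : ℕ → ℂ) (n : ℕ) : Matrix (Fin n) (Fin n) ℂ :=
  fun i j => if (j : ℕ) ≤ (i : ℕ) + 1 then c ((i : ℕ) + 2 - (j : ℕ)) else 0

noncomputable def pm (c : ℕ → ℂ) (r : ℕ) : ℂ := (M0 c r).det

noncomputable def Qmat (c : ℕ → ℂ) (s : ℕ) : Matrix (Fin s) (Fin s) ℂ :=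
  fun i j => if (j : ℕ) ≤ (i : ℕ) then c ((i : ℕ) + 1 - (j : ℕ)) else 0
/-- The matrix `M1` with ones exactly on the second superdiagonal. -/
noncomputable def M1mat (n : ℕ) : Matrix (Fin n) (Fin n) ℂ :=
  fun i j => if (j : ℕ) = (i : ℕ) + 2 then 1 else 0

/-- The upper shift matrix `B`. -/
noncomputable def Bmat (s : ℕ) : Matrix (Fin s) (Fin s) ℂ :=
  fun i j => if (j : ℕ) = (i : ℕ) + 1 then 1 else 0

/-!
Over `ℂ⟦X⟧` the block `A = Q + X B` of the pencil `M₀ + X M₁` is invertible, because its constant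
term `Q` is. Since `det (M₀ + X M₁) = 0`, the Schur complement of `A` vanishes, i.e.
`c_{n+1} = w A⁻¹ v`. Solving `A y = v` coefficientwise gives `y₀ = Q⁻¹ v` and
`y_{k+1} = -Q⁻¹ B y_k`, so `w A⁻¹ v = ∑ₖ (-X)ᵏ w Q⁻¹ (B Q⁻¹)ᵏ v`; comparing coefficients with the
constant `c_{n+1}` gives the claim.
-/

namespace Matrix

variable {R : Type*} [CommRing R]

theorem det_submatrix_equiv_equiv {ι κ : Type*} [Fintype ι] [DecidableEq ι] [Fintype κ]
    [DecidableEq κ] (e₁ e₂ : ι ≃ κ) (A : Matrix κ κ R) :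
    (A.submatrix e₁ e₂).det = Equiv.Perm.sign (e₁.symm.trans e₂) * A.det := by
  have hee : e₂ = e₁.trans (e₁.symm.trans e₂) := by ext; simp
  conv_lhs => rw [hee]
  exact (det_submatrix_equiv_self e₁ (A.submatrix id (e₁.symm.trans e₂))).trans
    (det_permute' _ A)

theorem apply_last_zero_eq_of_det_eq_zero {m : ℕ} (M : Matrix (Fin (m + 1)) (Fin (m + 1)) R)
    (hA : IsUnit (M.submatrix Fin.castSucc Fin.succ).det) (hM : M.det = 0) :
    M (Fin.last m) 0 = (fun j => M (Fin.last m) j.succ) ⬝ᵥ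
      ((M.submatrix Fin.castSucc Fin.succ)⁻¹ *ᵥ fun i => M i.castSucc 0) := by
  set A := M.submatrix Fin.castSucc Fin.succ
  let _ := invertibleOfIsUnitDet A hA
  let e₁ : Fin m ⊕ Unit ≃ Fin (m + 1) :=
    (finSuccEquivLast.trans (Equiv.optionEquivSumPUnit _)).symm
  let e₂ : Fin m ⊕ Unit ≃ Fin (m + 1) :=
    ((finSuccEquiv m).trans (Equiv.optionEquivSumPUnit _)).symm
  have hblocks : M.submatrix e₁ e₂ = fromBlocks A (replicateCol Unit fun i => M i.castSucc 0)
      (replicateRow Unit fun j => M (Fin.last m) j.succ) (of fun _ _ => M (Fin.last m) 0) := by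
    ext (i | i) (j | j) <;> simp [e₁, e₂, A]
  have hschur := det_fromBlocks₁₁ A (replicateCol Unit fun i => M i.castSucc 0)
    (replicateRow Unit fun j => M (Fin.last m) j.succ) (of fun _ _ => M (Fin.last m) 0)
  rw [← hblocks, det_submatrix_equiv_equiv, hM, mul_zero] at hschur
  have hcompl := hA.mul_right_eq_zero.mp hschur.symm
  rw [det_unique, invOf_eq_nonsing_inv, Matrix.mul_assoc, ← replicateCol_mulVec] at hcompl
  simpa [sub_eq_zero] using hcompl

end Matrix

namespace PowerSeries

variable {R : Type*} [CommRing R] {n : Type*} [Fintype n]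

theorem coeff_C_dotProduct (k : ℕ) (w : n → R) (y : n → R⟦X⟧) :
    coeff k ((fun j => C (w j)) ⬝ᵥ y) = w ⬝ᵥ fun j => coeff k (y j) := by
  simp only [dotProduct, map_sum, coeff_C_mul]

theorem coeff_map_C_mulVec (k : ℕ) (P : Matrix n n R) (y : n → R⟦X⟧) (i : n) :
    coeff k ((P.map C *ᵥ y) i) = (P *ᵥ fun j => coeff k (y j)) i :=
  coeff_C_dotProduct k (P i) y

theorem coeff_eq_of_map_C_add_X_smul_mulVec_eq [DecidableEq n] (Q P : Matrix n n R)
    (hQ : IsUnit Q.det) (v : n → R) (y : n → R⟦X⟧)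
    (hy : (Q.map C + (X : R⟦X⟧) • P.map C) *ᵥ y = fun i => C (v i)) (k : ℕ) :
    (fun i => coeff k (y i)) = (-1 : R) ^ k • ((Q⁻¹ * (P * Q⁻¹) ^ k) *ᵥ v) := by
  have hcoeff (k : ℕ) (i : n) := congrArg (coeff k) (congrFun hy i)
  simp only [add_mulVec, smul_mulVec, Pi.add_apply, Pi.smul_apply, smul_eq_mul, map_add,
    coeff_map_C_mulVec, coeff_C] at hcoeff
  have hzero : Q *ᵥ (fun i => coeff 0 (y i)) = v := by
    funext i
    simpa using hcoeff 0 i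
  have hsucc (k : ℕ) :
      Q *ᵥ (fun i => coeff (k + 1) (y i)) = -(P *ᵥ fun i => coeff k (y i)) := by
    funext i
    simpa [coeff_succ_X_mul, coeff_map_C_mulVec, eq_neg_iff_add_eq_zero] using hcoeff (k + 1) i
  have hsolve {a b : n → R} (h : Q *ᵥ a = b) : a = Q⁻¹ *ᵥ b := by
    rw [← h, mulVec_mulVec, nonsing_inv_mul _ hQ, one_mulVec]
  induction k with
  | zero => simpa using hsolve hzero
  | succ k ih =>
    rw [hsolve (hsucc k), ih, pow_succ', pow_succ']
    simp [mulVec_mulVec, Matrix.mul_assoc, mulVec_smul, mulVec_neg]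

end PowerSeries

section Pencil

open PowerSeries

variable {R : Type*} [CommRing R] {m : ℕ}

theorem det_pencil_eq_coe {ι : Type*} [Fintype ι] [DecidableEq ι] (M₀ M₁ : Matrix ι ι R) :
    (of fun i j => C (M₀ i j) + X * C (M₁ i j) : Matrix ι ι R⟦X⟧).det =
      ((Matrix.det (fun i j => Polynomial.C (M₀ i j) + Polynomial.X * Polynomial.C (M₁ i j)) :
        Polynomial R) : R⟦X⟧) := by
  refine Eq.trans ?_ (RingHom.map_det Polynomial.coeToPowerSeries.ringHom
    (of fun i j => Polynomial.C (M₀ i j) + Polynomial.X * Polynomial.C (M₁ i j))).symm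
  congr 1
  refine Matrix.ext fun i j => ?_
  simp only [of_apply, RingHom.mapMatrix_apply, map_apply,
    Polynomial.coeToPowerSeries.ringHom_apply, Polynomial.coe_add, Polynomial.coe_mul, Polynomial.coe_C, Polynomial.coe_X]

theorem dotProduct_mulVec_eq_ite_of_det_pencil_eq_zero
    (M₀ M₁ : Matrix (Fin (m + 1)) (Fin (m + 1)) R)
    (hcol : ∀ i : Fin m, M₁ i.castSucc 0 = 0) (hrow : ∀ j, M₁ (Fin.last m) j = 0)
    (hQ : IsUnit (M₀.submatrix Fin.castSucc Fin.succ).det)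
    (hdet : Matrix.det (fun i j => Polynomial.C (M₀ i j) + Polynomial.X * Polynomial.C (M₁ i j))
      = 0) (k : ℕ) :
    (fun j => M₀ (Fin.last m) j.succ) ⬝ᵥ
      (((M₀.submatrix Fin.castSucc Fin.succ)⁻¹ *
        (M₁.submatrix Fin.castSucc Fin.succ * (M₀.submatrix Fin.castSucc Fin.succ)⁻¹) ^ k) *ᵥ
          fun i => M₀ i.castSucc 0) = if k = 0 then M₀ (Fin.last m) 0 else 0 := by
  set Q := M₀.submatrix Fin.castSucc Fin.succ
  set B := M₁.submatrix Fin.castSucc Fin.succ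
  set M : Matrix (Fin (m + 1)) (Fin (m + 1)) R⟦X⟧ :=
    of fun i j => C (M₀ i j) + X * C (M₁ i j)
  have hM : M.det = 0 := by rw [det_pencil_eq_coe, hdet, Polynomial.coe_zero]
  have hA : M.submatrix Fin.castSucc Fin.succ = Q.map C + (X : R⟦X⟧) • B.map C :=
    Matrix.ext fun i j => by simp [M, Q, B]
  have hAunit : IsUnit (M.submatrix Fin.castSucc Fin.succ).det := by
    rw [isUnit_iff_constantCoeff, RingHom.map_det, hA]
    convert hQ
    ext i j
    simp
  have hcorner := apply_last_zero_eq_of_det_eq_zero M hAunit hM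
  have hv : (fun i : Fin m => M i.castSucc 0) = fun i => C (M₀ i.castSucc 0) := by
    funext i
    simp [M, hcol]
  have hw : (fun j : Fin m => M (Fin.last m) j.succ) = fun j => C (M₀ (Fin.last m) j.succ) := by
    funext j
    simp [M, hrow]
  have hc : M (Fin.last m) 0 = C (M₀ (Fin.last m) 0) := by simp [M, hrow]
  rw [hc, hw, hv] at hcorner
  have hy : (Q.map C + (X : R⟦X⟧) • B.map C) *ᵥ
      ((M.submatrix Fin.castSucc Fin.succ)⁻¹ *ᵥ fun i => C (M₀ i.castSucc 0)) =
        fun i => C (M₀ i.castSucc 0) := by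
    rw [← hA, mulVec_mulVec, mul_nonsing_inv _ hAunit, one_mulVec]
  have hcoeff := congrArg (coeff k) hcorner
  rw [coeff_C, coeff_C_dotProduct, coeff_eq_of_map_C_add_X_smul_mulVec_eq Q B hQ _ _ hy,
    dotProduct_smul, smul_eq_mul] at hcoeff
  split_ifs at hcoeff ⊢ with hk
  · subst hk
    simpa using hcoeff.symm
  · exact (isUnit_neg_one.pow k).mul_right_eq_zero.mp hcoeff.symm

end Pencil

section CriterionS

variable (c : ℕ → ℂ) {m : ℕ}

theorem det_Qmat (s : ℕ) : (Qmat c s).det = c 1 ^ s := by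
  rw [det_of_isLowerTriangular _ fun i j hij => ?_]
  · simp [Qmat]
  · have hij : (i : ℕ) < j := hij
    simp [Qmat, Nat.not_le.mpr hij]

theorem M0_submatrix_castSucc_succ :
    (M0 c (m + 1)).submatrix Fin.castSucc Fin.succ = Qmat c m := by
  ext i j
  simp only [submatrix_apply, M0, Qmat, Fin.val_castSucc, Fin.val_succ]
  split_ifs <;> first | rfl | omega | (congr 1; omega)

theorem M1mat_submatrix_castSucc_succ :
    (M1mat (m + 1)).submatrix Fin.castSucc Fin.succ = Bmat m := by
  ext i j
  simp [M1mat, Bmat]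

theorem M1mat_castSucc_zero (i : Fin m) : M1mat (m + 1) i.castSucc 0 = 0 := by
  simp [M1mat]

theorem M1mat_last_row (j : Fin (m + 1)) : M1mat (m + 1) (Fin.last m) j = 0 := by
  simp only [M1mat, Fin.val_last, ite_eq_right_iff]
  omega

theorem M0_castSucc_zero (i : Fin m) : M0 c (m + 1) i.castSucc 0 = c (i + 2) := by
  simp [M0]

theorem M0_last_succ (j : Fin m) : M0 c (m + 1) (Fin.last m) j.succ = c (m + 1 - j) := by
  simp only [M0, Fin.val_last, Fin.val_succ]
  rw [if_pos (by omega)]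
  congr 1
  omega

theorem M0_last_zero : M0 c (m + 1) (Fin.last m) 0 = c (m + 2) := by
  simp [M0]

end CriterionS

/-- Necessity in Criterion (S): if `det (M0 + x M1) = 0` in `ℂ[x]`, then
`w Q⁻¹ v = c (n+1)` and `w Q⁻¹ (B Q⁻¹)^k v = 0` for all `k ≥ 1`. -/
theorem stmt17 (n : ℕ) (hn : 3 ≤ n) (c : ℕ → ℂ)
    (hc : ∀ k, 1 ≤ k → k ≤ n + 1 → c k ≠ 0)
    (hdet : Matrix.det (fun i j : Fin n =>
      Polynomial.C (M0 c n i j) + Polynomial.X * Polynomial.C (M1mat n i j)) = 0) :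
    (fun i : Fin (n - 1) => c (n - (i : ℕ))) ⬝ᵥ
        ((Qmat c (n - 1))⁻¹ *ᵥ fun i : Fin (n - 1) => c ((i : ℕ) + 2)) = c (n + 1) ∧
    ∀ k, 1 ≤ k →
      (fun i : Fin (n - 1) => c (n - (i : ℕ))) ⬝ᵥ
        (((Qmat c (n - 1))⁻¹ * (Bmat (n - 1) * (Qmat c (n - 1))⁻¹) ^ k) *ᵥ
          fun i : Fin (n - 1) => c ((i : ℕ) + 2)) = 0 := by
  obtain ⟨m, rfl⟩ : ∃ m, n = m + 1 := ⟨n - 1, by omega⟩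
  have hQ : IsUnit (Qmat c m).det := by
    rw [det_Qmat]
    exact (pow_ne_zero _ (hc 1 le_rfl (by omega))).isUnit
  have key := dotProduct_mulVec_eq_ite_of_det_pencil_eq_zero (M0 c (m + 1)) (M1mat (m + 1))
    M1mat_castSucc_zero M1mat_last_row (by rwa [M0_submatrix_castSucc_succ]) hdet
  simp only [M0_submatrix_castSucc_succ, M1mat_submatrix_castSucc_succ, M0_castSucc_zero,
    M0_last_succ, M0_last_zero] at key
  exact ⟨by simpa using key 0, fun k hk => (key k).trans (if_neg (by omega))⟩
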